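/- arXiv:1801.09486 — 4 statements merged into one kernel-verified Lean document; each statement's English description precedes it below -/
import Mathlib

section
/- Let n, θ, λ, ζ, P_c > 0, let ε ∈ (0,1), and let c > 0. For ρ > 0 define the finite-blocklength rate r(ρ,z) = log(1+ρz)/log 2 − c·√(1 − (1+ρz)^{-2}) for z > 0, the mean rate E(ρ) = ∫_0^∞ r(ρ,z)·e^{−z} dz, and the effective energy efficiency with empty-buffer probability η(ρ) = [ −(1/(nθ))·log( ∫_0^∞ (ε + (1−ε)·exp(−nθ·r(ρ,z)))·e^{−z} dz ) ] / ( λζρ/E(ρ) + P_c ). Then η(ρ) tends to 0 as ρ tends to 0 from the right. -/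
/-!
As `ρ → 0⁺` the rate `r(ρ, z)` tends to `0` for every `z` and stays above `-c`, so by dominated
convergence `E_Z[ε + (1 - ε) e^{-nθ r}] → 1` and the effective capacity tends to `0`. The
denominator tends to `P_c` because the dispersion penalty dominates the mean rate: for `ρ ≤ 1`,
`log (1 + ρz) ≤ ρz` while `√(1 - (1 + ρz)⁻²) ≥ √ρ · √z / (1 + z)`, so `E(ρ) ≤ aρ - b√ρ` with
`b > 0`, and hence `ρ / E(ρ) → 0`.
-/

open MeasureTheory Filter Set Topology

noncomputable def fblRate (c ρ z : ℝ) : ℝ :=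
  Real.log (1 + ρ * z) / Real.log 2 - c * √(1 - 1 / (1 + ρ * z) ^ 2)

noncomputable def meanRate (c ρ : ℝ) : ℝ :=
  ∫ z in Ioi 0, fblRate c ρ z * Real.exp (-z)

lemma log_one_add_div_log_two_nonneg {u : ℝ} (hu : 0 ≤ u) : 0 ≤ Real.log (1 + u) / Real.log 2 :=
  div_nonneg (Real.log_nonneg (by linarith)) (Real.log_nonneg one_le_two)

lemma log_one_add_div_log_two_le {u : ℝ} (hu : 0 ≤ u) :
    Real.log (1 + u) / Real.log 2 ≤ u / Real.log 2 := by
  gcongr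
  linarith [Real.log_le_sub_one_of_pos (by linarith : 0 < 1 + u)]

lemma sqrt_one_sub_one_div_sq_le_one (u : ℝ) : √(1 - 1 / (1 + u) ^ 2) ≤ 1 :=
  Real.sqrt_le_one.mpr (by linarith [show 0 ≤ 1 / (1 + u) ^ 2 by positivity])

lemma sqrt_div_one_add_le_sqrt_one_sub {u : ℝ} (hu : 0 ≤ u) :
    √u / (1 + u) ≤ √(1 - 1 / (1 + u) ^ 2) := by
  have h1 : 1 / (1 + u) ^ 2 ≤ 1 := div_le_one_of_le₀ (by nlinarith) (by positivity)
  rw [Real.le_sqrt (by positivity) (by linarith), div_pow, Real.sq_sqrt hu, le_sub_iff_add_le,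
    ← add_div, div_le_one (by positivity)]
  nlinarith

lemma neg_le_fblRate {c ρ z : ℝ} (hc : 0 ≤ c) (hρz : 0 ≤ ρ * z) : -c ≤ fblRate c ρ z := by
  have := mul_le_mul_of_nonneg_left (sqrt_one_sub_one_div_sq_le_one (ρ * z)) hc
  rw [fblRate]
  linarith [log_one_add_div_log_two_nonneg hρz]

lemma abs_fblRate_le {c ρ z : ℝ} (hc : 0 ≤ c) (hρz : 0 ≤ ρ * z) :
    |fblRate c ρ z| ≤ ρ * z / Real.log 2 + c := by
  have hpen_le := mul_le_mul_of_nonneg_left (sqrt_one_sub_one_div_sq_le_one (ρ * z)) hc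
  have hpen_nonneg : 0 ≤ c * √(1 - 1 / (1 + ρ * z) ^ 2) := by positivity
  rw [abs_le, fblRate]
  constructor <;>
    linarith [log_one_add_div_log_two_nonneg hρz, log_one_add_div_log_two_le hρz,
      div_nonneg hρz (Real.log_nonneg one_le_two)]

lemma fblRate_le {c ρ z : ℝ} (hc : 0 ≤ c) (hρ₀ : 0 ≤ ρ) (hρ₁ : ρ ≤ 1) (hz : 0 ≤ z) :
    fblRate c ρ z ≤ ρ * z / Real.log 2 - c * √ρ * (√z / (1 + z)) := by
  have hρz : 0 ≤ ρ * z := mul_nonneg hρ₀ hz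
  have hsqrt : √ρ * (√z / (1 + z)) ≤ √(1 - 1 / (1 + ρ * z) ^ 2) :=
    calc √ρ * (√z / (1 + z)) = √(ρ * z) / (1 + z) := by rw [Real.sqrt_mul hρ₀, mul_div_assoc]
      _ ≤ √(ρ * z) / (1 + ρ * z) := by gcongr; nlinarith
      _ ≤ _ := sqrt_div_one_add_le_sqrt_one_sub hρz
  have := mul_le_mul_of_nonneg_left hsqrt hc
  rw [fblRate]
  linarith [log_one_add_div_log_two_le hρz]

lemma measurable_fblRate (c ρ : ℝ) : Measurable (fblRate c ρ) := by
  unfold fblRate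
  fun_prop

lemma tendsto_fblRate_zero (c z : ℝ) : Tendsto (fun ρ => fblRate c ρ z) (𝓝 0) (𝓝 0) := by
  have hcont : ContinuousAt (fun ρ => fblRate c ρ z) 0 := by
    unfold fblRate
    fun_prop (disch := norm_num)
  simpa [fblRate] using hcont.tendsto

lemma integrableOn_exp_neg : IntegrableOn (fun z : ℝ => Real.exp (-z)) (Ioi 0) := by
  simpa using exp_neg_integrableOn_Ioi 0 one_pos

lemma integrableOn_mul_exp_neg : IntegrableOn (fun z : ℝ => z * Real.exp (-z)) (Ioi 0) :=
  (Real.GammaIntegral_convergent two_pos).congr_fun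
    (fun z _ => by norm_num [mul_comm]) measurableSet_Ioi

lemma integrableOn_sqrt_div_one_add_mul_exp_neg :
    IntegrableOn (fun z : ℝ => √z / (1 + z) * Real.exp (-z)) (Ioi 0) := by
  refine integrableOn_exp_neg.mono' (by fun_prop) ?_
  filter_upwards [ae_restrict_mem measurableSet_Ioi] with z (hz : 0 < z)
  have : √z / (1 + z) ≤ 1 :=
    div_le_one_of_le₀ (by nlinarith [Real.sq_sqrt hz.le, Real.sqrt_nonneg z]) (by linarith)
  rw [Real.norm_of_nonneg (by positivity)]
  simpa using mul_le_mul_of_nonneg_right this (Real.exp_pos (-z)).le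

lemma setIntegral_sqrt_div_one_add_mul_exp_neg_pos :
    0 < ∫ z in Ioi (0 : ℝ), √z / (1 + z) * Real.exp (-z) := by
  rw [setIntegral_pos_iff_support_of_nonneg_ae _ integrableOn_sqrt_div_one_add_mul_exp_neg]
  · have hsupp : Ioi 0 ⊆ Function.support (fun z : ℝ => √z / (1 + z) * Real.exp (-z)) ∩ Ioi 0 :=
      fun z (hz : 0 < z) => ⟨(show 0 < √z / (1 + z) * Real.exp (-z) by positivity).ne', hz⟩
    exact (measure_mono hsupp).trans_lt' (by simp)
  · filter_upwards [ae_restrict_mem measurableSet_Ioi] with z (hz : 0 < z)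
    positivity

lemma integrableOn_fblRate_mul_exp_neg {c ρ : ℝ} (hc : 0 ≤ c) (hρ : 0 ≤ ρ) :
    IntegrableOn (fun z => fblRate c ρ z * Real.exp (-z)) (Ioi 0) := by
  refine ((integrableOn_mul_exp_neg.const_mul (ρ / Real.log 2)).add
    (integrableOn_exp_neg.const_mul c)).mono'
    ((measurable_fblRate c ρ).mul (by fun_prop)).aestronglyMeasurable ?_
  filter_upwards [ae_restrict_mem measurableSet_Ioi] with z (hz : 0 < z)
  rw [norm_mul, Real.norm_eq_abs, Real.norm_of_nonneg (Real.exp_pos _).le]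
  calc |fblRate c ρ z| * Real.exp (-z) ≤ (ρ * z / Real.log 2 + c) * Real.exp (-z) := by
        gcongr; exact abs_fblRate_le hc (by positivity)
    _ = _ := by simp only [Pi.add_apply]; ring

lemma exists_meanRate_le {c : ℝ} (hc : 0 < c) :
    ∃ a b : ℝ, 0 < b ∧ ∀ ρ ∈ Ioc (0 : ℝ) 1, meanRate c ρ ≤ a * ρ - b * √ρ := by
  set M := ∫ z in Ioi (0 : ℝ), z * Real.exp (-z)
  set K := ∫ z in Ioi (0 : ℝ), √z / (1 + z) * Real.exp (-z)
  refine ⟨M / Real.log 2, c * K, mul_pos hc setIntegral_sqrt_div_one_add_mul_exp_neg_pos,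
    fun ρ ⟨hρ₀, hρ₁⟩ => ?_⟩
  calc meanRate c ρ
      ≤ ∫ z in Ioi 0, (ρ / Real.log 2 * (z * Real.exp (-z))
          - c * √ρ * (√z / (1 + z) * Real.exp (-z))) := by
        refine setIntegral_mono_on (integrableOn_fblRate_mul_exp_neg hc.le hρ₀.le)
          ((integrableOn_mul_exp_neg.const_mul _).sub
            (integrableOn_sqrt_div_one_add_mul_exp_neg.const_mul _)) measurableSet_Ioi
          fun z (hz : 0 < z) => ?_
        exact (mul_le_mul_of_nonneg_right (fblRate_le hc.le hρ₀.le hρ₁ hz.le)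
          (Real.exp_pos (-z)).le).trans_eq (by ring)
    _ = M / Real.log 2 * ρ - c * K * √ρ := by
        rw [integral_sub (integrableOn_mul_exp_neg.const_mul _)
          (integrableOn_sqrt_div_one_add_mul_exp_neg.const_mul _), integral_const_mul,
          integral_const_mul]
        ring

lemma tendsto_div_of_le_sub_mul_sqrt {f : ℝ → ℝ} {a b : ℝ} (hb : 0 < b)
    (hf : ∀ᶠ x in 𝓝[>] 0, f x ≤ a * x - b * √x) :
    Tendsto (fun x => x / f x) (𝓝[>] 0) (𝓝 0) := by
  have hsqrt : Tendsto (fun x : ℝ => √x) (𝓝[>] 0) (𝓝[>] 0) := by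
    refine tendsto_nhdsWithin_of_tendsto_nhds_of_eventually_within _ ?_ ?_
    · simpa using Real.continuous_sqrt.continuousWithinAt.tendsto (x := 0) (s := Ioi 0)
    · filter_upwards [self_mem_nhdsWithin] with x (hx : 0 < x)
      exact Real.sqrt_pos.mpr hx
  have hbound : Tendsto (fun x => a - b * (√x)⁻¹) (𝓝[>] 0) atBot :=
    tendsto_atBot_add_const_left _ a
      (tendsto_neg_atTop_atBot.comp ((tendsto_inv_nhdsGT_zero.comp hsqrt).const_mul_atTop hb))
  have hquot : Tendsto (fun x => f x / x) (𝓝[>] 0) atBot := by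
    refine tendsto_atBot_mono' _ ?_ hbound
    filter_upwards [hf, self_mem_nhdsWithin] with x hfx (hx : 0 < x)
    rw [div_le_iff₀ hx, sub_mul, mul_assoc, inv_mul_eq_div, Real.div_sqrt]
    exact hfx
  exact hquot.inv_tendsto_atBot.congr fun x => inv_div (f x) x

lemma tendsto_div_meanRate {c : ℝ} (hc : 0 < c) :
    Tendsto (fun ρ => ρ / meanRate c ρ) (𝓝[>] 0) (𝓝 0) := by
  obtain ⟨a, b, hb, hle⟩ := exists_meanRate_le hc
  refine tendsto_div_of_le_sub_mul_sqrt (a := a) hb ?_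
  filter_upwards [Ioc_mem_nhdsGT one_pos] with ρ hρ using hle ρ hρ

lemma tendsto_setIntegral_mul_exp_neg {ι : Type*} {l : Filter ι} [l.IsCountablyGenerated]
    {F : ι → ℝ → ℝ} {C a : ℝ}
    (hmeas : ∀ᶠ i in l, AEStronglyMeasurable (F i) (volume.restrict (Ioi 0)))
    (hbound : ∀ᶠ i in l, ∀ z ∈ Ioi (0 : ℝ), |F i z| ≤ C)
    (hlim : ∀ z ∈ Ioi (0 : ℝ), Tendsto (fun i => F i z) l (𝓝 a)) :
    Tendsto (fun i => ∫ z in Ioi 0, F i z * Real.exp (-z)) l (𝓝 a) := by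
  have hdct := tendsto_integral_filter_of_dominated_convergence (μ := volume.restrict (Ioi 0))
    (fun z => C * Real.exp (-z)) (f := fun z => a * Real.exp (-z))
    (hmeas.mono fun i hi => hi.mul (by fun_prop))
    (hbound.mono fun i hi => (ae_restrict_mem measurableSet_Ioi).mono fun z hz => by
      rw [Pi.mul_apply, norm_mul, Real.norm_eq_abs, Real.norm_of_nonneg (Real.exp_pos _).le]
      exact mul_le_mul_of_nonneg_right (hi z hz) (Real.exp_pos _).le)
    (integrableOn_exp_neg.const_mul C)
    ((ae_restrict_mem measurableSet_Ioi).mono fun z hz => (hlim z hz).mul_const _)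
  simpa only [Pi.mul_apply, integral_const_mul, integral_exp_neg_Ioi_zero, mul_one] using hdct

lemma tendsto_setIntegral_eps_add_exp_neg_fblRate {s ε c : ℝ} (hs : 0 ≤ s) (hc : 0 ≤ c) :
    Tendsto (fun ρ => ∫ z in Ioi 0,
      (ε + (1 - ε) * Real.exp (-(s * fblRate c ρ z))) * Real.exp (-z)) (𝓝[>] 0) (𝓝 1) := by
  have hmeas (ρ : ℝ) :
      Measurable fun z => ε + (1 - ε) * Real.exp (-(s * fblRate c ρ z)) := by
    have := measurable_fblRate c ρ
    fun_prop
  refine tendsto_setIntegral_mul_exp_neg (C := |ε| + |1 - ε| * Real.exp (s * c))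
    (Eventually.of_forall fun ρ => (hmeas ρ).aestronglyMeasurable) ?_ fun z _ => ?_
  · filter_upwards [self_mem_nhdsWithin] with ρ (hρ : 0 < ρ) z (hz : 0 < z)
    have hexp_arg : -(s * fblRate c ρ z) ≤ s * c := by
      nlinarith [neg_le_fblRate hc (mul_pos hρ hz).le]
    calc |ε + (1 - ε) * Real.exp (-(s * fblRate c ρ z))|
        ≤ |ε| + |1 - ε| * Real.exp (-(s * fblRate c ρ z)) := by
          simpa [abs_mul] using abs_add_le ε ((1 - ε) * Real.exp (-(s * fblRate c ρ z)))
      _ ≤ _ := by gcongr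
  · have hrate := (tendsto_fblRate_zero c z).mono_left (nhdsWithin_le_nhds (s := Ioi 0))
    simpa using (((hrate.const_mul s).neg.rexp).const_mul (1 - ε)).const_add ε

theorem eee_ebp_tendsto_zero_at_zero_general
    (n θ lam ζ Pc c ε : ℝ)
    (hn : 0 < n) (hθ : 0 < θ) (hPc : 0 < Pc)
    (hc : 0 < c)
    (r : ℝ → ℝ → ℝ)
    (hr : ∀ ρ ∈ Set.Ioi (0:ℝ), ∀ z ∈ Set.Ioi (0:ℝ),
      r ρ z = Real.log (1 + ρ * z) / Real.log 2
        - c * Real.sqrt (1 - 1 / (1 + ρ * z) ^ 2))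
    (E : ℝ → ℝ)
    (hE : ∀ ρ ∈ Set.Ioi (0:ℝ), E ρ = ∫ z in Set.Ioi (0:ℝ), r ρ z * Real.exp (-z))
    (η : ℝ → ℝ)
    (hη : ∀ ρ ∈ Set.Ioi (0:ℝ), η ρ =
      (-(1 / (n * θ)) * Real.log (∫ z in Set.Ioi (0:ℝ),
          (ε + (1 - ε) * Real.exp (-(n * θ * r ρ z))) * Real.exp (-z)))
        / (lam * ζ * ρ / E ρ + Pc)) :
    Tendsto η (nhdsWithin 0 (Set.Ioi 0)) (nhds 0) := by
  have hnum : Tendsto (fun ρ => -(1 / (n * θ)) * Real.log (∫ z in Ioi 0,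
      (ε + (1 - ε) * Real.exp (-(n * θ * fblRate c ρ z))) * Real.exp (-z))) (𝓝[>] 0) (𝓝 0) := by
    simpa using ((tendsto_setIntegral_eps_add_exp_neg_fblRate (ε := ε) (mul_pos hn hθ).le
      hc.le).log one_ne_zero).const_mul (-(1 / (n * θ)))
  have hden : Tendsto (fun ρ => lam * ζ * ρ / meanRate c ρ + Pc) (𝓝[>] 0) (𝓝 Pc) := by
    simpa [mul_div_assoc] using ((tendsto_div_meanRate hc).const_mul (lam * ζ)).add_const Pc
  have hlim := hnum.div hden hPc.ne'
  rw [zero_div] at hlim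
  refine hlim.congr' ?_
  filter_upwards [self_mem_nhdsWithin] with ρ hρ
  have hrate : EqOn (fblRate c ρ) (r ρ) (Ioi 0) := fun z hz => by rw [hr ρ hρ z hz, fblRate]
  rw [Pi.div_apply, hη ρ hρ, hE ρ hρ, meanRate]
  congr 3 <;> refine setIntegral_congr_fun measurableSet_Ioi fun z hz => ?_ <;> simp only [hrate hz]

/-- The effective energy efficiency with empty-buffer probability tends to 0
as the SNR ρ tends to 0 from the right. -/
theorem eee_ebp_tendsto_zero_at_zero
    (n θ lam ζ Pc c ε : ℝ)
    (hn : 0 < n) (hθ : 0 < θ) (hlam : 0 < lam) (hζ : 0 < ζ) (hPc : 0 < Pc)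
    (hc : 0 < c) (hε : ε ∈ Set.Ioo (0:ℝ) 1)
    (r : ℝ → ℝ → ℝ)
    (hr : ∀ ρ ∈ Set.Ioi (0:ℝ), ∀ z ∈ Set.Ioi (0:ℝ),
      r ρ z = Real.log (1 + ρ * z) / Real.log 2
        - c * Real.sqrt (1 - 1 / (1 + ρ * z) ^ 2))
    (E : ℝ → ℝ)
    (hE : ∀ ρ ∈ Set.Ioi (0:ℝ), E ρ = ∫ z in Set.Ioi (0:ℝ), r ρ z * Real.exp (-z))
    (η : ℝ → ℝ)
    (hη : ∀ ρ ∈ Set.Ioi (0:ℝ), η ρ =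
      (-(1 / (n * θ)) * Real.log (∫ z in Set.Ioi (0:ℝ),
          (ε + (1 - ε) * Real.exp (-(n * θ * r ρ z))) * Real.exp (-z)))
        / (lam * ζ * ρ / E ρ + Pc)) :
    Tendsto η (nhdsWithin 0 (Set.Ioi 0)) (nhds 0) :=
  eee_ebp_tendsto_zero_at_zero_general n θ lam ζ Pc c ε hn hθ hPc hc r hr E hE η hη
end

section
/- Let Q(x) = ∫_x^∞ (1/√(2π))·e^{−t²/2} dt be the Gaussian tail function, and let q : (0,1) → ℝ satisfy Q(q(ε)) = ε for all ε ∈ (0,1). Then for any constants K > 0 and b > 0, the function ε ↦ ε + (1−ε)·K·exp(b·q(ε)) is convex on the interval (0,1). -/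
/-! Write `x = q ε`, so that `1 - ε = Φ x` for the standard normal distribution function `Φ`
with density `φ`.
Differentiating through the inverse function, the derivative of the function at `ε` is
`1 - K e^{b x} (1 + b Φ(x)/φ(x))`. Mills' inequality `x Φ(x) + φ(x) ≥ 0` gives
`(Φ/φ)' = 1 + x Φ/φ ≥ 0`, so this is antitone in `x`; as `q` is decreasing, the derivative is
increasing in `ε`. -/

open MeasureTheory Filter Set ProbabilityTheory Topology

lemma gaussianPDFReal_zero_one_apply (t : ℝ) :
    gaussianPDFReal 0 1 t = (Real.sqrt (2 * Real.pi))⁻¹ * Real.exp (-t ^ 2 / 2) := by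
  simp [gaussianPDFReal]

lemma hasDerivAt_gaussianPDFReal_zero_one (x : ℝ) :
    HasDerivAt (gaussianPDFReal 0 1) (-x * gaussianPDFReal 0 1 x) x := by
  have hexp : HasDerivAt (fun t : ℝ => -t ^ 2 / 2) (-x) x :=
    ((hasDerivAt_pow 2 x).neg.div_const 2).congr_deriv (by push_cast; ring)
  rw [show gaussianPDFReal 0 1 = _ from funext gaussianPDFReal_zero_one_apply]
  exact (hexp.exp.const_mul _).congr_deriv (by ring)

lemma integrable_mul_gaussianPDFReal_zero_one :
    Integrable fun t => t * gaussianPDFReal 0 1 t := by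
  refine ((integrable_mul_exp_neg_mul_sq (b := 1 / 2) (by norm_num)).const_mul
    (Real.sqrt (2 * Real.pi))⁻¹).congr (ae_of_all _ fun t => ?_)
  simp only [gaussianPDFReal_zero_one_apply]
  ring_nf

lemma integral_Iic_mul_gaussianPDFReal_zero_one (x : ℝ) :
    ∫ t in Iic x, t * gaussianPDFReal 0 1 t = -gaussianPDFReal 0 1 x := by
  have hderiv : ∀ t ∈ Iic x, HasDerivAt (-gaussianPDFReal 0 1) (t * gaussianPDFReal 0 1 t) t :=
    fun t _ => by simpa using (hasDerivAt_gaussianPDFReal_zero_one t).neg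
  have hint := integrable_mul_gaussianPDFReal_zero_one.integrableOn (s := Iic x)
  rw [integral_Iic_of_hasDerivAt_of_tendsto' hderiv hint
    (tendsto_zero_of_hasDerivAt_of_integrableOn_Iic hderiv hint
      (integrable_gaussianPDFReal 0 1).neg.integrableOn), sub_zero, Pi.neg_apply]

noncomputable def gaussianCDF (x : ℝ) : ℝ := ∫ t in Iic x, gaussianPDFReal 0 1 t

-- Mills' inequality: `x Φ(x) + φ(x) = ∫_{-∞}^x (x - t) φ(t) dt ≥ 0`.
lemma neg_gaussianPDFReal_le_mul_gaussianCDF (x : ℝ) :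
    -gaussianPDFReal 0 1 x ≤ x * gaussianCDF x := by
  rw [← integral_Iic_mul_gaussianPDFReal_zero_one, gaussianCDF, ← integral_const_mul]
  refine setIntegral_mono_on integrable_mul_gaussianPDFReal_zero_one.integrableOn
    ((integrable_gaussianPDFReal 0 1).const_mul x).integrableOn measurableSet_Iic fun t ht => ?_
  exact mul_le_mul_of_nonneg_right ht (gaussianPDFReal_nonneg 0 1 t)

lemma gaussianCDF_add_integral_Ioi (x : ℝ) :
    gaussianCDF x + ∫ t in Ioi x, gaussianPDFReal 0 1 t = 1 := by
  have hint := integrable_gaussianPDFReal 0 1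
  rw [gaussianCDF, intervalIntegral.integral_Iic_add_Ioi hint.integrableOn hint.integrableOn,
    integral_gaussianPDFReal_eq_one 0 one_ne_zero]

lemma hasDerivAt_gaussianCDF (x : ℝ) : HasDerivAt gaussianCDF (gaussianPDFReal 0 1 x) x := by
  have hint := integrable_gaussianPDFReal 0 1
  have hCDF :
      gaussianCDF = fun u => gaussianCDF 0 + ∫ t in (0 : ℝ)..u, gaussianPDFReal 0 1 t := by
    funext u
    rw [gaussianCDF, gaussianCDF,
      ← intervalIntegral.integral_Iic_sub_Iic hint.integrableOn hint.integrableOn, add_sub_cancel]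
  rw [hCDF]
  exact (intervalIntegral.integral_hasDerivAt_right hint.intervalIntegrable
    hint.aestronglyMeasurable.stronglyMeasurableAtFilter
    (hasDerivAt_gaussianPDFReal_zero_one x).continuousAt).const_add _

lemma strictMono_gaussianCDF : StrictMono gaussianCDF :=
  strictMono_of_hasDerivAt_pos hasDerivAt_gaussianCDF fun x =>
    gaussianPDFReal_pos 0 1 x one_ne_zero

lemma gaussianCDF_mem_Ioo (x : ℝ) : gaussianCDF x ∈ Ioo 0 1 := by
  constructor
  · calc 0 ≤ gaussianCDF (x - 1) :=
          setIntegral_nonneg measurableSet_Iic fun t _ => gaussianPDFReal_nonneg 0 1 t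
      _ < gaussianCDF x := strictMono_gaussianCDF (by linarith)
  · calc gaussianCDF x < gaussianCDF (x + 1) := strictMono_gaussianCDF (by linarith)
      _ ≤ 1 := by
        linarith [gaussianCDF_add_integral_Ioi (x + 1),
          setIntegral_nonneg (μ := volume) (measurableSet_Ioi (a := x + 1))
            fun t _ => gaussianPDFReal_nonneg 0 1 t]

-- `Φ(x)/φ(x)` is the Mills ratio of the standard normal distribution at `-x`.
noncomputable def gaussianCDFDivPDF (x : ℝ) : ℝ := gaussianCDF x / gaussianPDFReal 0 1 x

lemma gaussianCDFDivPDF_nonneg (x : ℝ) : 0 ≤ gaussianCDFDivPDF x :=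
  div_nonneg (gaussianCDF_mem_Ioo x).1.le (gaussianPDFReal_nonneg 0 1 x)

lemma hasDerivAt_gaussianCDFDivPDF (x : ℝ) :
    HasDerivAt gaussianCDFDivPDF (1 + x * gaussianCDFDivPDF x) x := by
  have hφ := (gaussianPDFReal_pos 0 1 x one_ne_zero).ne'
  refine ((hasDerivAt_gaussianCDF x).div (hasDerivAt_gaussianPDFReal_zero_one x) hφ).congr_deriv
    ?_
  rw [gaussianCDFDivPDF]
  field_simp
  ring

lemma monotone_gaussianCDFDivPDF : Monotone gaussianCDFDivPDF :=
  monotone_of_hasDerivAt_nonneg hasDerivAt_gaussianCDFDivPDF fun x => by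
    have hφ := gaussianPDFReal_pos 0 1 x one_ne_zero
    rw [gaussianCDFDivPDF, ← mul_div_assoc, one_add_div hφ.ne']
    exact div_nonneg (by linarith [neg_gaussianPDFReal_le_mul_gaussianCDF x]) hφ.le

lemma antitone_one_sub_mul_exp_mul_one_add_mul_gaussianCDFDivPDF {K b : ℝ} (hK : 0 ≤ K)
    (hb : 0 ≤ b) :
    Antitone fun x => 1 - K * (Real.exp (b * x) * (1 + b * gaussianCDFDivPDF x)) := by
  have hmono : Monotone fun x => Real.exp (b * x) * (1 + b * gaussianCDFDivPDF x) :=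
    Monotone.mul (fun x y h => Real.exp_le_exp.2 (mul_le_mul_of_nonneg_left h hb))
      (fun x y h =>
        add_le_add_right (mul_le_mul_of_nonneg_left (monotone_gaussianCDFDivPDF h) hb) 1)
      (fun x => (Real.exp_pos _).le)
      (fun x => add_nonneg zero_le_one (mul_nonneg hb (gaussianCDFDivPDF_nonneg x)))
  exact fun x y h => sub_le_sub_left (mul_le_mul_of_nonneg_left (hmono h) hK) 1

section RightInverse

variable {Q q : ℝ → ℝ} {s : Set ℝ}

lemma StrictAnti.antitoneOn_of_rightInvOn (hQ : StrictAnti Q) (hq : RightInvOn q Q s) :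
    AntitoneOn q s := fun a ha c hc hac => hQ.le_iff_ge.1 (by rwa [hq ha, hq hc])

lemma StrictAnti.continuousAt_of_rightInvOn (hQ : StrictAnti Q) (hQs : ∀ x, Q x ∈ s)
    (hq : RightInvOn q Q s) {y : ℝ} (hy : s ∈ 𝓝 y) : ContinuousAt q y := by
  have hsurj : q '' s = univ :=
    eq_univ_of_forall fun x => ⟨Q x, hQs x, hQ.injective (hq (hQs x))⟩
  exact continuousAt_of_monotoneOn_of_image_mem_nhds (β := ℝᵒᵈ)
    (f := fun y => OrderDual.toDual (q y)) (hQ.antitoneOn_of_rightInvOn hq) hy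
    (by change q '' s ∈ 𝓝 (q y); rw [hsurj]; exact univ_mem)

lemma StrictAnti.hasDerivAt_of_rightInvOn (hQ : StrictAnti Q) (hQs : ∀ x, Q x ∈ s)
    (hq : RightInvOn q Q s) (hs : IsOpen s) {y Q' : ℝ} (hy : y ∈ s)
    (hQ' : HasDerivAt Q Q' (q y)) (hQ'0 : Q' ≠ 0) : HasDerivAt q Q'⁻¹ y :=
  hQ'.of_local_left_inverse (hQ.continuousAt_of_rightInvOn hQs hq (hs.mem_nhds hy)) hQ'0
    (eventually_of_mem (hs.mem_nhds hy) fun _ hz => hq hz)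

end RightInverse

lemma convexOn_of_hasDerivAt_of_monotoneOn {s : Set ℝ} (hs : Convex ℝ s) (hso : IsOpen s)
    {f f' : ℝ → ℝ} (hf : ∀ x ∈ s, HasDerivAt f (f' x) x) (hf' : MonotoneOn f' s) :
    ConvexOn ℝ s f := by
  refine MonotoneOn.convexOn_of_deriv hs (fun x hx => (hf x hx).continuousAt.continuousWithinAt)
    ?_ ?_ <;> rw [hso.interior_eq]
  · exact fun x hx => (hf x hx).differentiableAt.differentiableWithinAt
  · exact hf'.congr fun x hx => (hf x hx).deriv.symm

lemma hasDerivAt_add_one_sub_mul_mul_exp (K b : ℝ) {q : ℝ → ℝ} {ε : ℝ}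
    (hq : HasDerivAt q (-gaussianPDFReal 0 1 (q ε))⁻¹ ε) (hqε : gaussianCDF (q ε) = 1 - ε) :
    HasDerivAt (fun ε => ε + (1 - ε) * K * Real.exp (b * q ε))
      (1 - K * (Real.exp (b * q ε) * (1 + b * gaussianCDFDivPDF (q ε)))) ε := by
  have hφ := (gaussianPDFReal_pos 0 1 (q ε) one_ne_zero).ne'
  refine ((hasDerivAt_id ε).add ((((hasDerivAt_id ε).const_sub 1).mul_const K).mul
    (hq.const_mul b).exp)).congr_deriv ?_
  rw [gaussianCDFDivPDF, hqε, id]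
  field_simp
  ring

/-- With Q the Gaussian tail function and q its inverse on (0,1),
for K > 0 and b > 0 the map ε ↦ ε + (1-ε)·K·exp(b·q(ε)) is convex on (0,1). -/
theorem convexOn_eps_plus_exp_Qinv
    (Q q : ℝ → ℝ)
    (hQ : ∀ x : ℝ, Q x = ∫ t in Set.Ioi x, (Real.sqrt (2 * Real.pi))⁻¹ * Real.exp (-t ^ 2 / 2))
    (hq : ∀ ε ∈ Set.Ioo (0:ℝ) 1, Q (q ε) = ε)
    (K b : ℝ) (hK : 0 < K) (hb : 0 < b) :
    ConvexOn ℝ (Set.Ioo (0:ℝ) 1) (fun ε => ε + (1 - ε) * K * Real.exp (b * q ε)) := by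
  obtain rfl : Q = fun x => 1 - gaussianCDF x := funext fun x => by
    rw [hQ, ← gaussianCDF_add_integral_Ioi x]
    simp [gaussianPDFReal_zero_one_apply]
  have hanti : StrictAnti fun x => 1 - gaussianCDF x :=
    fun _ _ h => sub_lt_sub_left (strictMono_gaussianCDF h) 1
  have hmaps (x : ℝ) : 1 - gaussianCDF x ∈ Ioo (0 : ℝ) 1 := by
    obtain ⟨h0, h1⟩ := gaussianCDF_mem_Ioo x
    constructor <;> linarith
  have hinv : RightInvOn q (fun x => 1 - gaussianCDF x) (Ioo 0 1) := fun ε hε => hq ε hε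
  refine convexOn_of_hasDerivAt_of_monotoneOn (convex_Ioo 0 1) isOpen_Ioo (fun ε hε => ?_)
    ((antitone_one_sub_mul_exp_mul_one_add_mul_gaussianCDFDivPDF hK.le hb.le).comp_antitoneOn
      (hanti.antitoneOn_of_rightInvOn hinv))
  refine hasDerivAt_add_one_sub_mul_mul_exp K b ?_ (by linarith [hq ε hε])
  exact hanti.hasDerivAt_of_rightInvOn hmaps hinv isOpen_Ioo hε
    ((hasDerivAt_gaussianCDF (q ε)).const_sub 1)
    (neg_ne_zero.2 (gaussianPDFReal_pos 0 1 (q ε) one_ne_zero).ne')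
end

section
/- Let n, θ > 0, ε ∈ (0,1), c ≥ 0, and define r(ρ,z) = log(1+ρz)/log 2 − c·√(1 − (1+ρz)^{-2}) for ρ > 0, z > 0. Then ∫_0^∞ (ε + (1−ε)·exp(−nθ·r(ρ,z)))·e^{−z} dz tends to ε as ρ tends to infinity; consequently the effective capacity −(1/(nθ))·log ∫_0^∞ (ε + (1−ε)e^{−nθ r(ρ,z)})e^{−z} dz tends to −log ε/(nθ) as ρ → ∞. -/
set_option maxHeartbeats 800000

open MeasureTheory Filter Set

/-- ψ(ρ) = ∫_0^∞ (ε + (1-ε)e^{-nθ r(ρ,z)}) e^{-z} dz tends to ε as ρ → ∞;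
consequently the effective capacity -log ψ(ρ)/(nθ) tends to -log ε/(nθ). -/
theorem psi_tendsto_eps_at_top
    (n θ ε c : ℝ) (hn : 0 < n) (hθ : 0 < θ) (hε : ε ∈ Set.Ioo (0:ℝ) 1) (hc : 0 ≤ c)
    (r : ℝ → ℝ → ℝ)
    (hr : ∀ ρ ∈ Set.Ioi (0:ℝ), ∀ z ∈ Set.Ioi (0:ℝ),
      r ρ z = Real.log (1 + ρ * z) / Real.log 2
        - c * Real.sqrt (1 - 1 / (1 + ρ * z) ^ 2)) :
    Tendsto (fun ρ => ∫ z in Set.Ioi (0:ℝ),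
        (ε + (1 - ε) * Real.exp (-(n * θ * r ρ z))) * Real.exp (-z))
      atTop (nhds ε)
    ∧ Tendsto (fun ρ => -(1 / (n * θ)) * Real.log (∫ z in Set.Ioi (0:ℝ),
        (ε + (1 - ε) * Real.exp (-(n * θ * r ρ z))) * Real.exp (-z)))
      atTop (nhds (-Real.log ε / (n * θ))) := by
  obtain ⟨hε0, hε1⟩ := hε
  have hnθ : 0 < n * θ := mul_pos hn hθ
  -- lower bound on r
  have hr_ge : ∀ ρ ∈ Set.Ioi (0:ℝ), ∀ z ∈ Set.Ioi (0:ℝ), -c ≤ r ρ z := by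
    intro ρ hρ z hz
    rw [hr ρ hρ z hz]
    have hρz : (0:ℝ) < ρ * z := mul_pos hρ hz
    have h1 : 0 ≤ Real.log (1 + ρ * z) / Real.log 2 :=
      div_nonneg (Real.log_nonneg (by linarith)) (Real.log_nonneg (by norm_num))
    have h2 : Real.sqrt (1 - 1 / (1 + ρ * z) ^ 2) ≤ 1 := by
      rw [Real.sqrt_le_one]
      have : (0:ℝ) ≤ 1 / (1 + ρ * z) ^ 2 := by positivity
      linarith
    nlinarith [Real.sqrt_nonneg (1 - 1 / (1 + ρ * z) ^ 2)]
  -- part 1: dominated convergence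
  have h1 : Tendsto (fun ρ => ∫ z in Set.Ioi (0:ℝ),
      (ε + (1 - ε) * Real.exp (-(n * θ * r ρ z))) * Real.exp (-z))
      atTop (nhds ε) := by
    have key : Tendsto (fun ρ => ∫ z in Set.Ioi (0:ℝ),
        (ε + (1 - ε) * Real.exp (-(n * θ * r ρ z))) * Real.exp (-z))
        atTop (nhds (∫ z in Set.Ioi (0:ℝ), ε * Real.exp (-z))) := by
      apply tendsto_integral_filter_of_dominated_convergence
        (fun z => (ε + (1 - ε) * Real.exp (n * θ * c)) * Real.exp (-z))
      · -- measurability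
        filter_upwards [eventually_gt_atTop (0:ℝ)] with ρ hρ
        have heq : (fun z => (ε + (1 - ε) * Real.exp (-(n * θ * r ρ z))) * Real.exp (-z))
            =ᶠ[ae (volume.restrict (Set.Ioi (0:ℝ)))]
            (fun z => (ε + (1 - ε) * Real.exp (-(n * θ * (Real.log (1 + ρ * z) / Real.log 2
              - c * Real.sqrt (1 - 1 / (1 + ρ * z) ^ 2))))) * Real.exp (-z)) := by
          filter_upwards [ae_restrict_mem measurableSet_Ioi] with z hz
          rw [hr ρ hρ z hz]
        refine AEStronglyMeasurable.congr ?_ heq.symm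
        apply Measurable.aestronglyMeasurable
        have m1 : Measurable (fun z : ℝ => 1 + ρ * z) :=
          measurable_const.add (measurable_id.const_mul ρ)
        have m2 : Measurable fun z : ℝ => Real.log (1 + ρ * z) := Real.measurable_log.comp m1
        have m3 : Measurable fun z : ℝ => Real.sqrt (1 - 1 / (1 + ρ * z) ^ 2) :=
          Real.continuous_sqrt.measurable.comp (measurable_const.sub (measurable_const.div (m1.pow_const 2)))
        exact (measurable_const.add (measurable_const.mul (Real.measurable_exp.comp
          ((((m2.div_const _).sub (measurable_const.mul m3)).const_mul (n * θ)).neg)))).mul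
          (Real.measurable_exp.comp measurable_neg)
      · -- bound
        filter_upwards [eventually_gt_atTop (0:ℝ)] with ρ hρ
        filter_upwards [ae_restrict_mem measurableSet_Ioi] with z hz
        have hrge := hr_ge ρ hρ z hz
        have he : Real.exp (-(n * θ * r ρ z)) ≤ Real.exp (n * θ * c) := by
          apply Real.exp_le_exp.mpr
          nlinarith
        have hpos : 0 ≤ (ε + (1 - ε) * Real.exp (-(n * θ * r ρ z))) * Real.exp (-z) := by
          have h1ε : (0:ℝ) ≤ 1 - ε := by linarith
          have h3 : (0:ℝ) ≤ ε + (1 - ε) * Real.exp (-(n * θ * r ρ z)) :=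
            add_nonneg hε0.le (mul_nonneg h1ε (Real.exp_nonneg _))
          exact mul_nonneg h3 (Real.exp_nonneg _)
        rw [Real.norm_eq_abs, abs_of_nonneg hpos]
        have : ε + (1 - ε) * Real.exp (-(n * θ * r ρ z))
            ≤ ε + (1 - ε) * Real.exp (n * θ * c) := by nlinarith
        exact mul_le_mul_of_nonneg_right this (Real.exp_nonneg _)
      · -- integrable bound
        have hint : IntegrableOn (fun z => Real.exp (-z)) (Set.Ioi (0:ℝ)) := by
          simpa [neg_one_mul] using exp_neg_integrableOn_Ioi 0 one_pos
        exact hint.const_mul _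
      · -- pointwise limit
        filter_upwards [ae_restrict_mem measurableSet_Ioi] with z hz
        have hz' : (0:ℝ) < z := hz
        have hlog : Tendsto (fun ρ => Real.log (1 + ρ * z) / Real.log 2 - c) atTop atTop := by
          apply tendsto_atTop_add_const_right
          apply Tendsto.atTop_div_const (by positivity : (0:ℝ) < Real.log 2)
          apply Real.tendsto_log_atTop.comp
          apply tendsto_atTop_add_const_left
          exact tendsto_id.atTop_mul_const hz'
        have hrlim : Tendsto (fun ρ => n * θ * r ρ z) atTop atTop := by
          apply Tendsto.const_mul_atTop hnθ
          apply tendsto_atTop_mono' _ _ hlog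
          filter_upwards [eventually_gt_atTop (0:ℝ)] with ρ hρ
          rw [hr ρ hρ z hz]
          have h2 : Real.sqrt (1 - 1 / (1 + ρ * z) ^ 2) ≤ 1 := by
            rw [Real.sqrt_le_one]
            have : (0:ℝ) ≤ 1 / (1 + ρ * z) ^ 2 := by positivity
            linarith
          nlinarith [Real.sqrt_nonneg (1 - 1 / (1 + ρ * z) ^ 2)]
        have hexp : Tendsto (fun ρ => Real.exp (-(n * θ * r ρ z))) atTop (nhds 0) :=
          Real.tendsto_exp_atBot.comp (tendsto_neg_atTop_atBot.comp hrlim)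
        have hlim2 : Tendsto (fun ρ => (ε + (1 - ε) * Real.exp (-(n * θ * r ρ z)))
            * Real.exp (-z)) atTop (nhds ((ε + (1 - ε) * 0) * Real.exp (-z))) :=
          ((tendsto_const_nhds.add (tendsto_const_nhds.mul hexp)).mul tendsto_const_nhds)
        simpa using hlim2
    have hval : (∫ z in Set.Ioi (0:ℝ), ε * Real.exp (-z)) = ε := by
      rw [MeasureTheory.integral_const_mul, integral_exp_neg_Ioi_zero, mul_one]
    rwa [hval] at key
  refine ⟨h1, ?_⟩
  have h2 : Tendsto (fun ρ => Real.log (∫ z in Set.Ioi (0:ℝ),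
      (ε + (1 - ε) * Real.exp (-(n * θ * r ρ z))) * Real.exp (-z)))
      atTop (nhds (Real.log ε)) := h1.log (ne_of_gt hε0)
  have := h2.const_mul (-(1 / (n * θ)))
  convert this using 2
  field_simp
end

section
/- Let c > 0 and define r(ρ,z) = log(1+ρz)/log 2 − c·√(1 − (1+ρz)^{-2}) for ρ > 0, z > 0, and E(ρ) = ∫_0^∞ r(ρ,z)·e^{−z} dz. Then ρ / E(ρ) tends to 0 as ρ tends to 0 from the right. -/
/-!
Since `log (1 + ρ z) ≤ ρ z`, the capacity term contributes only `O(ρ)` to `E(ρ)`, whereas the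
dispersion term behaves like `√(2 ρ z)` for small `ρ z` and contributes `-Θ(√ρ)`. Hence
`E(ρ) ≤ -κ √ρ` near `0⁺` for some `κ > 0`, and `|ρ / E(ρ)| ≤ √ρ / κ → 0`.
-/

open MeasureTheory Filter Set Real Topology

lemma integrableOn_Ioi_mul_exp_neg : IntegrableOn (fun z : ℝ => z * exp (-z)) (Ioi 0) := by
  have h := GammaIntegral_convergent (s := 2) two_pos
  norm_num at h
  simpa only [mul_comm] using h

lemma integral_Ioi_mul_exp_neg : ∫ z in Ioi (0 : ℝ), z * exp (-z) = 1 := by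
  have h := Gamma_eq_integral (s := 2) two_pos
  norm_num [Gamma_two] at h
  simpa only [mul_comm] using h.symm

lemma one_sub_one_div_one_add_sq_le_one (x : ℝ) : 1 - 1 / (1 + x) ^ 2 ≤ 1 := by
  have : 0 ≤ 1 / (1 + x) ^ 2 := by positivity
  linarith

lemma half_le_one_sub_one_div_one_add_sq {x : ℝ} (hx₀ : 0 ≤ x) (hx₁ : x ≤ 1) :
    x / 2 ≤ 1 - 1 / (1 + x) ^ 2 := by
  rw [le_sub_iff_add_le, ← le_sub_iff_add_le', div_le_iff₀ (by positivity)]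
  nlinarith [mul_nonneg hx₀ hx₀, mul_nonneg (mul_nonneg hx₀ hx₀) hx₀]

section
variable {ρ : ℝ}

lemma log_one_add_mul_mul_exp_neg_le (hρ : 0 ≤ ρ) {z : ℝ} (hz : 0 ≤ z) :
    log (1 + ρ * z) * exp (-z) ≤ ρ * (z * exp (-z)) := by
  have hlog : log (1 + ρ * z) ≤ ρ * z := by
    linarith [log_le_sub_one_of_pos (x := 1 + ρ * z) (by positivity)]
  calc log (1 + ρ * z) * exp (-z) ≤ ρ * z * exp (-z) := by gcongr
    _ = ρ * (z * exp (-z)) := mul_assoc _ _ _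

lemma integrableOn_log_one_add_mul_mul_exp_neg (hρ : 0 ≤ ρ) :
    IntegrableOn (fun z => log (1 + ρ * z) * exp (-z)) (Ioi 0) := by
  refine (integrableOn_Ioi_mul_exp_neg.const_mul ρ).mono' (by fun_prop) ?_
  filter_upwards [ae_restrict_mem measurableSet_Ioi] with z (hz : 0 < z)
  have hlog : 0 ≤ log (1 + ρ * z) := log_nonneg (by nlinarith)
  rw [norm_of_nonneg (by positivity)]
  exact log_one_add_mul_mul_exp_neg_le hρ hz.le

lemma integral_log_one_add_mul_mul_exp_neg_le (hρ : 0 ≤ ρ) :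
    ∫ z in Ioi 0, log (1 + ρ * z) * exp (-z) ≤ ρ := by
  calc ∫ z in Ioi 0, log (1 + ρ * z) * exp (-z)
      ≤ ∫ z in Ioi 0, ρ * (z * exp (-z)) :=
        setIntegral_mono_on (integrableOn_log_one_add_mul_mul_exp_neg hρ)
          (integrableOn_Ioi_mul_exp_neg.const_mul ρ) measurableSet_Ioi
          fun z hz => log_one_add_mul_mul_exp_neg_le hρ (le_of_lt hz)
    _ = ρ := by rw [integral_const_mul, integral_Ioi_mul_exp_neg, mul_one]

lemma integrableOn_sqrt_one_sub_one_div_one_add_mul_sq_mul_exp_neg :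
    IntegrableOn (fun z => √(1 - 1 / (1 + ρ * z) ^ 2) * exp (-z)) (Ioi 0) := by
  refine (integrableOn_exp_neg_Ioi 0).mono' (by fun_prop) (Eventually.of_forall fun z => ?_)
  rw [norm_mul, norm_of_nonneg (sqrt_nonneg _), norm_of_nonneg (exp_pos _).le]
  exact mul_le_of_le_one_left (exp_pos _).le
    (sqrt_le_one.mpr (one_sub_one_div_one_add_sq_le_one _))

/-- On `z ∈ (1/2, 1]` we have `ρ z ∈ [ρ/2, 1]`, so the integrand is at least `(√ρ / 2) e⁻¹`. -/
lemma sqrt_mul_exp_neg_one_div_four_le_integral (hρ₀ : 0 ≤ ρ) (hρ₁ : ρ ≤ 1) :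
    √ρ * exp (-1) / 4 ≤ ∫ z in Ioi 0, √(1 - 1 / (1 + ρ * z) ^ 2) * exp (-z) := by
  have hsub : Ioc (1 / 2 : ℝ) 1 ⊆ Ioi 0 := fun z hz => by simp only [mem_Ioi]; linarith [hz.1]
  have hlower : ∀ z ∈ Ioc (1 / 2 : ℝ) 1,
      √ρ / 2 * exp (-1) ≤ √(1 - 1 / (1 + ρ * z) ^ 2) * exp (-z) := by
    rintro z ⟨hz₀, hz₁⟩
    have hx := half_le_one_sub_one_div_one_add_sq (x := ρ * z) (by nlinarith) (by nlinarith)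
    have hsqrt : √ρ / 2 ≤ √(1 - 1 / (1 + ρ * z) ^ 2) := by
      calc √ρ / 2 = √(ρ / 4) := by
            rw [sqrt_div' _ (by norm_num), show (4 : ℝ) = 2 ^ 2 by norm_num, sqrt_sq two_pos.le]
        _ ≤ √(1 - 1 / (1 + ρ * z) ^ 2) := sqrt_le_sqrt (by nlinarith)
    gcongr
  calc √ρ * exp (-1) / 4 = ∫ _ in Ioc (1 / 2 : ℝ) 1, √ρ / 2 * exp (-1) := by
        rw [setIntegral_const, measureReal_def, volume_Ioc, ENNReal.toReal_ofReal (by norm_num),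
          smul_eq_mul]
        ring
    _ ≤ ∫ z in Ioc (1 / 2 : ℝ) 1, √(1 - 1 / (1 + ρ * z) ^ 2) * exp (-z) :=
        setIntegral_mono_on (integrableOn_const measure_Ioc_lt_top.ne)
          (integrableOn_sqrt_one_sub_one_div_one_add_mul_sq_mul_exp_neg.mono_set hsub)
          measurableSet_Ioc hlower
    _ ≤ ∫ z in Ioi 0, √(1 - 1 / (1 + ρ * z) ^ 2) * exp (-z) :=
        setIntegral_mono_set integrableOn_sqrt_one_sub_one_div_one_add_mul_sq_mul_exp_neg
          (Eventually.of_forall fun z => by positivity) hsub.eventuallyLE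

end

lemma integral_rate_mul_exp_neg_le {c ρ : ℝ} (hc : 0 ≤ c) (hρ₀ : 0 ≤ ρ) (hρ₁ : ρ ≤ 1) :
    ∫ z in Ioi 0, (log (1 + ρ * z) / log 2 - c * √(1 - 1 / (1 + ρ * z) ^ 2)) * exp (-z)
      ≤ ρ / log 2 - c * exp (-1) / 4 * √ρ := by
  have hsplit : ∫ z in Ioi 0,
        (log (1 + ρ * z) / log 2 - c * √(1 - 1 / (1 + ρ * z) ^ 2)) * exp (-z)
      = (∫ z in Ioi 0, log (1 + ρ * z) * exp (-z)) / log 2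
        - c * ∫ z in Ioi 0, √(1 - 1 / (1 + ρ * z) ^ 2) * exp (-z) := by
    rw [← integral_div, ← integral_const_mul, ← integral_sub
      ((integrableOn_log_one_add_mul_mul_exp_neg hρ₀).div_const _)
      (integrableOn_sqrt_one_sub_one_div_one_add_mul_sq_mul_exp_neg.const_mul c)]
    congr 1 with z
    ring
  rw [hsplit]
  have hlog := div_le_div_of_nonneg_right (integral_log_one_add_mul_mul_exp_neg_le hρ₀)
    (log_pos one_lt_two).le
  have hsqrt := mul_le_mul_of_nonneg_left (sqrt_mul_exp_neg_one_div_four_le_integral hρ₀ hρ₁) hc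
  linarith

lemma tendsto_div_nhdsGT_zero_of_le_mul_sub_mul_sqrt {f : ℝ → ℝ} {a b : ℝ} (hb : 0 < b)
    (hf : ∀ᶠ ρ in 𝓝[>] 0, f ρ ≤ a * ρ - b * √ρ) :
    Tendsto (fun ρ => ρ / f ρ) (𝓝[>] 0) (𝓝 0) := by
  have hsqrt : Tendsto (fun ρ : ℝ => √ρ) (𝓝[>] 0) (𝓝 0) := by
    simpa using (continuous_sqrt.tendsto 0).mono_left nhdsWithin_le_nhds
  have hsmall : ∀ᶠ ρ in 𝓝[>] 0, a * √ρ < b / 2 := by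
    simpa using (hsqrt.const_mul a).eventually (gt_mem_nhds (by simpa using half_pos hb))
  refine squeeze_zero_norm' ?_ (by simpa using hsqrt.const_mul (2 / b))
  filter_upwards [hf, hsmall, self_mem_nhdsWithin] with ρ hfρ hsmallρ (hρ : 0 < ρ)
  have hsq : √ρ * √ρ = ρ := mul_self_sqrt hρ.le
  have hpos : 0 < √ρ := sqrt_pos.mpr hρ
  -- `a ρ = √ρ · a √ρ ≤ (b/2) √ρ`, so `f ρ ≤ -(b/2) √ρ`
  have hneg : f ρ ≤ -(b / 2 * √ρ) := by nlinarith
  rw [norm_div, norm_of_nonneg hρ.le, norm_of_nonpos (by nlinarith),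
    div_le_iff₀ (by nlinarith)]
  calc ρ = 2 / b * √ρ * (b / 2 * √ρ) := by field_simp; exact (sq_sqrt hρ.le).symm
    _ ≤ 2 / b * √ρ * -f ρ := by gcongr; linarith

/-- with E(ρ) = ∫_0^∞ r(ρ,z) e^{-z} dz the mean finite-blocklength rate,
ρ/E(ρ) tends to 0 as ρ → 0⁺. -/
theorem snr_div_mean_rate_tendsto_zero
    (c : ℝ) (hc : 0 < c)
    (r : ℝ → ℝ → ℝ)
    (hr : ∀ ρ ∈ Set.Ioi (0:ℝ), ∀ z ∈ Set.Ioi (0:ℝ),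
      r ρ z = Real.log (1 + ρ * z) / Real.log 2
        - c * Real.sqrt (1 - 1 / (1 + ρ * z) ^ 2))
    (E : ℝ → ℝ)
    (hE : ∀ ρ ∈ Set.Ioi (0:ℝ), E ρ = ∫ z in Set.Ioi (0:ℝ), r ρ z * Real.exp (-z)) :
    Tendsto (fun ρ => ρ / E ρ) (nhdsWithin 0 (Set.Ioi 0)) (nhds 0) := by
  refine tendsto_div_nhdsGT_zero_of_le_mul_sub_mul_sqrt (a := 1 / log 2)
    (b := c * exp (-1) / 4) (by positivity) ?_
  filter_upwards [Ioc_mem_nhdsGT one_pos] with ρ ⟨hρ₀, hρ₁⟩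
  rw [hE ρ hρ₀, setIntegral_congr_fun measurableSet_Ioi fun z hz => by rw [hr ρ hρ₀ z hz],
    one_div_mul_eq_div]
  exact integral_rate_mul_exp_neg_le hc.le hρ₀.le hρ₁
end
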